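/- Causal factorization of interacting fields from causal factorization of the S-matrix: suppose S(H + G + F) = S(H + G) ⋆ S(G)^{⋆−1} ⋆ S(G + F) whenever supp H ∩ (supp F + V̄₋) = ∅. Define F_S := (ℏ/i) d/dλ|_{λ=0} [ S(S)^{⋆−1} ⋆ S(S + λF) ]. Then F_{S+G} = F_S whenever supp G ∩ (supp F + V̄₋) = ∅. -/
import Mathlib


open scoped Pointwise

/-- Bogoliubov's formula: the interacting field
`F_S := (ℏ/i) d/dλ|_{λ=0} [𝒮(S)^{⋆-1} ⋆ 𝒮(S + λF)]`. -/
noncomputable def intField {Loc A : Type*} [AddCommGroup Loc] [Module ℂ Loc]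
    [NormedRing A] [NormedAlgebra ℂ A]
    (𝒮 : Loc → A) (ℏ : ℂ) (S F : Loc) : A :=
  (ℏ / Complex.I) • deriv (fun l : ℂ => Ring.inverse (𝒮 S) * 𝒮 (S + l • F)) 0

/-- if the `S`-matrix satisfies causal factorization
`𝒮(H + G + F) = 𝒮(H + G) ⋆ 𝒮(G)^{⋆-1} ⋆ 𝒮(G + F)` whenever
`supp H ∩ (supp F + V̄₋) = ∅`, then the interacting fields defined by Bogoliubov's
formula satisfy causality: `F_{S+G} = F_S` whenever `supp G ∩ (supp F + V̄₋) = ∅`. -/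
theorem stmt18 {Loc A : Type*} [AddCommGroup Loc] [Module ℂ Loc]
    [NormedRing A] [NormedAlgebra ℂ A]
    (d : ℕ) (supp : Loc → Set (Fin d → ℝ)) (Vminus : Set (Fin d → ℝ))
    (𝒮 : Loc → A) (hunit : ∀ X, IsUnit (𝒮 X))
    (hsuppSmul : ∀ (c : ℂ) (F : Loc), supp (c • F) ⊆ supp F)
    (hcausal : ∀ Hc G F : Loc, supp Hc ∩ (supp F + Vminus) = ∅ →
      𝒮 (Hc + G + F) = 𝒮 (Hc + G) * Ring.inverse (𝒮 G) * 𝒮 (G + F))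
    (ℏ : ℂ) (S G F : Loc)
    (hdisj : supp G ∩ (supp F + Vminus) = ∅) :
    intField 𝒮 ℏ (S + G) F = intField 𝒮 ℏ S F := by
  unfold intField
  congr 2
  funext l
  have hd : supp G ∩ (supp (l • F) + Vminus) = ∅ := by
    apply Set.eq_empty_of_subset_empty
    rw [← hdisj]
    exact Set.inter_subset_inter_right _
      (Set.add_subset_add_right (hsuppSmul l F))
  have h := hcausal G S (l • F) hd
  have e1 : S + G + l • F = G + S + l • F := by abel
  have e2 : S + G = G + S := add_comm _ _
  rw [e1, h, e2, mul_assoc, ← mul_assoc (Ring.inverse (𝒮 (G + S))),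
    Ring.inverse_mul_cancel _ (hunit (G + S)), one_mul]
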